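/- arXiv:math/0204276 — 8 statements merged into one kernel-verified Lean document; each statement's English description precedes it below -/
import Mathlib

section
/- Let N ≥ 1 and let a : ℤ → ℂ. Let T be the (N+1)×(N+1) complex Toeplitz matrix with entries T j k = a (j - k) for 0 ≤ j, k ≤ N. If T is normal (i.e., T * Tᴴ = Tᴴ * T, where Tᴴ is the conjugate transpose), then T is of type I or of type II; that is, either there exists α₀ ∈ ℂ with |α₀| = 1 such that a(-k) = α₀ * conj(a k) for all 1 ≤ k ≤ N, or there exists β₀ ∈ ℂ with |β₀| = 1 such that a(-k) = β₀ * a(N + 1 - k) for all 1 ≤ k ≤ N. -/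
/-!
Comparing the entries `(q, p)` and `(q - 1, p - 1)` of `T * Tᴴ = Tᴴ * T`, the sums telescope
and leave, for `1 ≤ p, q ≤ N`, the identity `x xᴴ + x♯ x♯ᴴ = y yᴴ + y♯ y♯ᴴ` for the vectors
`x p = a (-p)`, `y p = conj (a p)`, where `v♯ p = conj (v (N + 1 - p))` (`reflectConj`).

If `y, y♯` are independent, equality of these rank-two Gram matrices forces `x = α y + β y♯`
and then `x♯ = conj β y + conj α y♯`, with a unitary coefficient matrix; its orthogonality
relation reads `α conj β = 0`, so `x = α y` (type I) or `x = β y♯` (type II). If `y, y♯` are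
dependent, so are `x, x♯` (the 2 × 2 minors of both pairs have equal moduli), and since `♯` is a
conjugate-linear involution, `y♯ = c y` and `x♯ = μ x` with `|c| = |μ| = 1`; the identity
collapses to `x xᴴ = y yᴴ`, whence `x = α y` with `|α| = 1`.
-/

open Matrix Finset ComplexConjugate Function

lemma Complex.mul_conj_eq_one_iff {u : ℂ} : u * conj u = 1 ↔ ‖u‖ = 1 := by
  rw [Complex.mul_conj']
  exact_mod_cast pow_eq_one_iff_of_nonneg (norm_nonneg u) two_ne_zero

section Gram

variable {ι : Type*} {x w y z : ι → ℂ}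

lemma linearIndependent_pair_of_mul_sub_mul_ne_zero {p q : ι} (h : y p * z q - y q * z p ≠ 0) :
    LinearIndependent ℂ ![y, z] := by
  refine LinearIndependent.pair_iff.mpr fun s t hst => ?_
  have hp := congrFun hst p
  have hq := congrFun hst q
  simp only [Pi.add_apply, Pi.smul_apply, smul_eq_mul, Pi.zero_apply] at hp hq
  constructor
  · refine (mul_eq_zero.mp ?_).resolve_right h
    linear_combination z q * hp - z p * hq
  · refine (mul_eq_zero.mp ?_).resolve_right h
    linear_combination y p * hq - y q * hp

variable (hG : ∀ p q, x p * conj (x q) + w p * conj (w q) = y p * conj (y q) + z p * conj (z q))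
include hG

-- Both sides are the determinant of the Gram matrix of the rows `p` and `q`.
lemma normSq_mul_sub_mul_eq_of_gram (p q : ι) :
    Complex.normSq (x p * w q - x q * w p) = Complex.normSq (y p * z q - y q * z p) := by
  apply Complex.ofReal_injective
  rw [← Complex.mul_conj, ← Complex.mul_conj]
  simp only [map_sub, map_mul]
  linear_combination (x q * conj (x q) + w q * conj (w q)) * hG p p
    + (y p * conj (y p) + z p * conj (z p)) * hG q q
    - (x q * conj (x p) + w q * conj (w p)) * hG p q
    - (y p * conj (y q) + z p * conj (z q)) * hG q p

lemma exists_eq_smul_add_smul_of_gram {p₁ q₁ : ι} (h : y p₁ * z q₁ - y q₁ * z p₁ ≠ 0) :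
    ∃ a b : ℂ, x = a • y + b • z := by
  -- Cramer's rule on the rows `p₁`, `q₁` of the Gram identity.
  have hΔ : conj (x p₁ * w q₁ - x q₁ * w p₁) ≠ 0 := by
    rwa [map_ne_zero, Ne, ← Complex.normSq_eq_zero, normSq_mul_sub_mul_eq_of_gram hG,
      Complex.normSq_eq_zero]
  refine ⟨conj (y p₁ * w q₁ - y q₁ * w p₁) / conj (x p₁ * w q₁ - x q₁ * w p₁),
    conj (z p₁ * w q₁ - z q₁ * w p₁) / conj (x p₁ * w q₁ - x q₁ * w p₁), funext fun p => ?_⟩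
  simp only [Pi.add_apply, Pi.smul_apply, smul_eq_mul]
  rw [div_mul_eq_mul_div, div_mul_eq_mul_div, ← add_div, eq_div_iff hΔ]
  simp only [map_sub, map_mul]
  linear_combination conj (w q₁) * hG p p₁ - conj (w p₁) * hG p q₁

lemma mul_conj_add_mul_conj_eq_one_and_zero_of_gram (hyz : LinearIndependent ℂ ![y, z])
    {a b c d : ℂ} (hx : x = a • y + b • z) (hw : w = c • y + d • z) :
    a * conj a + c * conj c = 1 ∧ a * conj b + c * conj d = 0 := by
  have hrow : ∀ q, (a * conj a + c * conj c - 1) * conj (y q)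
      + (a * conj b + c * conj d) * conj (z q) = 0 := by
    intro q
    refine (LinearIndependent.pair_iff.mp hyz _
      ((b * conj a + d * conj c) * conj (y q) + (b * conj b + d * conj d - 1) * conj (z q))
      (funext fun p => ?_)).1
    have h := hG p q
    rw [hx, hw] at h
    simp only [Pi.add_apply, Pi.smul_apply, smul_eq_mul, map_add, map_mul, Pi.zero_apply] at h ⊢
    linear_combination h
  have h := LinearIndependent.pair_iff.mp hyz (conj (a * conj a + c * conj c - 1))
    (conj (a * conj b + c * conj d)) (funext fun q => by
      simpa only [Pi.add_apply, Pi.smul_apply, smul_eq_mul, map_add, map_mul, Pi.zero_apply,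
        map_zero, Complex.conj_conj] using congrArg conj (hrow q))
  simpa only [map_eq_zero, sub_eq_zero] using h

end Gram

lemma exists_eq_smul_of_mul_conj_eq {ι : Type*} {x y : ι → ℂ}
    (h : ∀ p q, x p * conj (x q) = y p * conj (y q)) : ∃ α : ℂ, ‖α‖ = 1 ∧ x = α • y := by
  by_cases hy : y = 0
  · refine ⟨1, norm_one, funext fun p => ?_⟩
    have h := h p p
    rw [hy, Pi.zero_apply, zero_mul] at h
    simpa [hy] using h
  · obtain ⟨p₀, hp₀⟩ := Function.ne_iff.mp hy
    have hyy : y p₀ * conj (y p₀) ≠ 0 := mul_ne_zero hp₀ ((map_ne_zero conj).mpr hp₀)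
    refine ⟨x p₀ / y p₀, ?_, funext fun p => ?_⟩
    · apply Complex.mul_conj_eq_one_iff.mp
      rw [map_div₀, div_mul_div_comm, h, div_self hyy]
    · simp only [Pi.smul_apply, smul_eq_mul]
      rw [div_mul_eq_mul_div, eq_div_iff hp₀]
      refine mul_right_cancel₀ ((map_ne_zero conj).mpr hp₀) ?_
      linear_combination x p₀ * h p p₀ - x p * h p₀ p₀

section Reflect

variable {ι : Type*} {σ : ι → ι}

def reflectConj (σ : ι → ι) (v : ι → ℂ) : ι → ℂ := fun p => conj (v (σ p))

@[simp]
lemma reflectConj_apply (v : ι → ℂ) (p : ι) : reflectConj σ v p = conj (v (σ p)) := rfl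

@[simp]
lemma reflectConj_add (u v : ι → ℂ) :
    reflectConj σ (u + v) = reflectConj σ u + reflectConj σ v :=
  funext fun _ => map_add conj _ _

@[simp]
lemma reflectConj_smul (c : ℂ) (v : ι → ℂ) : reflectConj σ (c • v) = conj c • reflectConj σ v :=
  funext fun _ => map_mul conj _ _

lemma reflectConj_reflectConj (hσ : Involutive σ) (v : ι → ℂ) :
    reflectConj σ (reflectConj σ v) = v :=
  funext fun p => by simp [hσ p]

lemma exists_reflectConj_eq_smul (hσ : Involutive σ) {v : ι → ℂ}
    (hdep : ∀ p q, v p * reflectConj σ v q - v q * reflectConj σ v p = 0) :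
    ∃ c : ℂ, ‖c‖ = 1 ∧ reflectConj σ v = c • v := by
  by_cases hv : v = 0
  · exact ⟨1, norm_one, by ext; simp [hv]⟩
  obtain ⟨p₀, hp₀⟩ := Function.ne_iff.mp hv
  obtain ⟨c, hc⟩ : ∃ c, reflectConj σ v = c • v := ⟨reflectConj σ v p₀ / v p₀, funext fun p => by
    rw [Pi.smul_apply, smul_eq_mul, div_mul_eq_mul_div, eq_div_iff hp₀]
    linear_combination -hdep p p₀⟩
  refine ⟨c, Complex.mul_conj_eq_one_iff.mp ?_, hc⟩
  have h := congrFun (reflectConj_reflectConj hσ v) p₀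
  rw [hc, reflectConj_smul, hc, smul_smul, Pi.smul_apply, smul_eq_mul] at h
  refine mul_right_cancel₀ hp₀ ?_
  linear_combination h

variable (hσ : Involutive σ) {x y : ι → ℂ}
  (hG : ∀ p q, x p * conj (x q) + reflectConj σ x p * conj (reflectConj σ x q)
    = y p * conj (y q) + reflectConj σ y p * conj (reflectConj σ y q))
include hσ hG

lemma eq_smul_or_eq_smul_reflectConj_of_mul_sub_mul_ne_zero {p₁ q₁ : ι}
    (h : y p₁ * reflectConj σ y q₁ - y q₁ * reflectConj σ y p₁ ≠ 0) :
    (∃ α : ℂ, ‖α‖ = 1 ∧ x = α • y) ∨ (∃ β : ℂ, ‖β‖ = 1 ∧ x = β • reflectConj σ y) := by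
  obtain ⟨a, b, hx⟩ := exists_eq_smul_add_smul_of_gram hG h
  have hw : reflectConj σ x = conj b • y + conj a • reflectConj σ y := by
    rw [hx, reflectConj_add, reflectConj_smul, reflectConj_smul, reflectConj_reflectConj hσ,
      add_comm]
  obtain ⟨h₁, h₂⟩ := mul_conj_add_mul_conj_eq_one_and_zero_of_gram hG
    (linearIndependent_pair_of_mul_sub_mul_ne_zero h) hx hw
  rw [Complex.conj_conj] at h₁ h₂
  rcases mul_eq_zero.mp (by linear_combination h₂ / 2 : a * conj b = 0) with ha | hb
  · refine Or.inr ⟨b, Complex.mul_conj_eq_one_iff.mp ?_, by rw [hx, ha, zero_smul, zero_add]⟩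
    linear_combination h₁ - conj a * ha
  · rw [map_eq_zero] at hb
    refine Or.inl ⟨a, Complex.mul_conj_eq_one_iff.mp ?_, by rw [hx, hb, zero_smul, add_zero]⟩
    linear_combination h₁ - conj b * hb

lemma exists_eq_smul_of_mul_sub_mul_eq_zero
    (h : ∀ p q, y p * reflectConj σ y q - y q * reflectConj σ y p = 0) :
    ∃ α : ℂ, ‖α‖ = 1 ∧ x = α • y := by
  obtain ⟨c, hc, hcy⟩ := exists_reflectConj_eq_smul hσ h
  obtain ⟨μ, hμ, hμx⟩ := exists_reflectConj_eq_smul hσ fun p q => by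
    rw [← Complex.normSq_eq_zero, normSq_mul_sub_mul_eq_of_gram hG, Complex.normSq_eq_zero, h]
  refine exists_eq_smul_of_mul_conj_eq fun p q => ?_
  have hpq := hG p q
  rw [hcy, hμx] at hpq
  simp only [Pi.smul_apply, smul_eq_mul, map_mul] at hpq
  linear_combination (hpq - x p * conj (x q) * Complex.mul_conj_eq_one_iff.mpr hμ
    + y p * conj (y q) * Complex.mul_conj_eq_one_iff.mpr hc) / 2

theorem eq_smul_or_eq_smul_reflectConj_of_gram_eq :
    (∃ α : ℂ, ‖α‖ = 1 ∧ x = α • y) ∨ (∃ β : ℂ, ‖β‖ = 1 ∧ x = β • reflectConj σ y) := by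
  by_cases h : ∃ p q, y p * reflectConj σ y q - y q * reflectConj σ y p ≠ 0
  · obtain ⟨p, q, hpq⟩ := h
    exact eq_smul_or_eq_smul_reflectConj_of_mul_sub_mul_ne_zero hσ hG hpq
  · exact Or.inl (exists_eq_smul_of_mul_sub_mul_eq_zero hσ hG (by simpa using h))

end Reflect

section Toeplitz

variable {N : ℕ} {a : ℤ → ℂ} {T : Matrix (Fin (N + 1)) (Fin (N + 1)) ℂ}
  (hT : ∀ j k : Fin (N + 1), T j k = a ((j : ℤ) - (k : ℤ))) (hnormal : T * Tᴴ = Tᴴ * T)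
include hT hnormal

lemma sum_mul_conj_eq_sum_conj_mul_of_normal {j k : ℕ} (hj : j ≤ N) (hk : k ≤ N) :
    ∑ s ∈ range (N + 1), a (j - s) * conj (a (k - s))
      = ∑ s ∈ range (N + 1), conj (a (s - j)) * a (s - k) := by
  have h := congrFun₂ hnormal ⟨j, by omega⟩ ⟨k, by omega⟩
  simp only [mul_apply, conjTranspose_apply, hT, ← starRingEnd_apply] at h
  rwa [Fin.sum_univ_eq_sum_range (fun s : ℕ => a (j - s) * conj (a (k - s))),
    Fin.sum_univ_eq_sum_range (fun s : ℕ => conj (a (s - j)) * a (s - k))] at h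

lemma gram_identity_of_normal {p q : ℤ} (hp : p ∈ Set.Icc 1 (N : ℤ))
    (hq : q ∈ Set.Icc 1 (N : ℤ)) :
    a (-p) * conj (a (-q)) + conj (a (-(N + 1 - p))) * a (-(N + 1 - q))
      = conj (a p) * a q + a (N + 1 - p) * conj (a (N + 1 - q)) := by
  obtain ⟨hp₁, hpN⟩ := hp
  obtain ⟨hq₁, hqN⟩ := hq
  lift p to ℕ using by omega
  lift q to ℕ using by omega
  norm_cast at hp₁ hpN hq₁ hqN
  have h₁ := sum_mul_conj_eq_sum_conj_mul_of_normal hT hnormal hqN hpN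
  have h₀ := sum_mul_conj_eq_sum_conj_mul_of_normal hT hnormal
    (j := q - 1) (k := p - 1) (by omega) (by omega)
  have tele (f : ℕ → ℂ) :
      ∑ s ∈ range (N + 1), f s - ∑ s ∈ range (N + 1), f (s + 1) = f 0 - f (N + 1) := by
    rw [← sum_sub_distrib, sum_range_sub']
  have hL := tele fun s => a (q - s) * conj (a (p - s))
  have hR := tele fun s => conj (a (s - q)) * a (s - p)
  push_cast [Nat.cast_sub hp₁, Nat.cast_sub hq₁] at h₀ h₁ hL hR
  have e₁ (m s : ℤ) : m - (s + 1) = m - 1 - s := by ring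
  have e₂ (m s : ℤ) : s + 1 - m = s - (m - 1) := by ring
  simp only [e₁, e₂] at hL hR
  rw [h₁, h₀] at hL
  have h := hL.symm.trans hR
  ring_nf at h ⊢
  linear_combination -h

end Toeplitz

theorem normal_toeplitz_typeI_or_typeII_general (N : ℕ) (a : ℤ → ℂ)
    (T : Matrix (Fin (N + 1)) (Fin (N + 1)) ℂ)
    (hT : ∀ j k : Fin (N + 1), T j k = a ((j : ℤ) - (k : ℤ)))
    (hnormal : T * Tᴴ = Tᴴ * T) :
    (∃ α₀ : ℂ, ‖α₀‖ = 1 ∧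
      ∀ k : ℤ, 1 ≤ k → k ≤ N → a (-k) = α₀ * (starRingEnd ℂ) (a k)) ∨
    (∃ β₀ : ℂ, ‖β₀‖ = 1 ∧
      ∀ k : ℤ, 1 ≤ k → k ≤ N → a (-k) = β₀ * a ((N : ℤ) + 1 - k)) := by
  let σ : Set.Icc (1 : ℤ) N → Set.Icc (1 : ℤ) N := fun p => ⟨N + 1 - p, by grind⟩
  have hσ : Involutive σ := fun p => Subtype.ext (by simp [σ])
  rcases eq_smul_or_eq_smul_reflectConj_of_gram_eq hσ (x := fun p => a (-p))
      (y := fun p => conj (a p))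
      (fun p q => by simpa [σ] using gram_identity_of_normal hT hnormal p.2 q.2)
    with ⟨α, hα, hx⟩ | ⟨β, hβ, hx⟩
  · exact Or.inl ⟨α, hα, fun k hk₁ hkN => by simpa using congrFun hx ⟨k, hk₁, hkN⟩⟩
  · exact Or.inr ⟨β, hβ, fun k hk₁ hkN => by simpa [σ] using congrFun hx ⟨k, hk₁, hkN⟩⟩

theorem normal_toeplitz_typeI_or_typeII (N : ℕ) (hN : 1 ≤ N) (a : ℤ → ℂ)
    (T : Matrix (Fin (N + 1)) (Fin (N + 1)) ℂ)
    (hT : ∀ j k : Fin (N + 1), T j k = a ((j : ℤ) - (k : ℤ)))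
    (hnormal : T * Tᴴ = Tᴴ * T) :
    (∃ α₀ : ℂ, ‖α₀‖ = 1 ∧
      ∀ k : ℤ, 1 ≤ k → k ≤ N → a (-k) = α₀ * (starRingEnd ℂ) (a k)) ∨
    (∃ β₀ : ℂ, ‖β₀‖ = 1 ∧
      ∀ k : ℤ, 1 ≤ k → k ≤ N → a (-k) = β₀ * a ((N : ℤ) + 1 - k)) :=
  normal_toeplitz_typeI_or_typeII_general N a T hT hnormal
end

section
/- Let N ≥ 1 and let a : ℤ → ℝ. Let T be the (N+1)×(N+1) real Toeplitz matrix with entries T j k = a (j - k) for 0 ≤ j, k ≤ N. If T is normal (i.e., T * Tᵀ = Tᵀ * T), then T is of one of four types: symmetric (a(-k) = a k for all 1 ≤ k ≤ N), skew-symmetric up to the diagonal (a(-k) = -a k for all 1 ≤ k ≤ N), circulant (a(-k) = a(N + 1 - k) for all 1 ≤ k ≤ N), or skew-circulant (a(-k) = -a(N + 1 - k) for all 1 ≤ k ≤ N). -/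
/-!
Comparing the entries `(p - 1, q - 1)` and `(p, q)` of `T Tᵀ = Tᵀ T`, all but two terms of each
sum cancel, leaving for `1 ≤ p, q ≤ N`
`a p * a q + a (N+1-p) * a (N+1-q) = a (-p) * a (-q) + a (p-N-1) * a (q-N-1)`.
Adding or subtracting the same identity at `(p, N+1-q)` shows that `u p = a p ± a (N+1-p)` and
`v p = a (-p) ± a (p-N-1)` satisfy `u p * u q = v p * v q`, which forces `v = u` or `v = -u`.
The four choices of the two signs are the four types.
-/

open Finset Matrix

variable {R : Type*}

theorem Set.eqOn_or_eqOn_neg_of_mul_eq_mul [CommRing R] [NoZeroDivisors R] {ι : Type*}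
    {s : Set ι} {x y : ι → R} (h : ∀ p ∈ s, ∀ q ∈ s, y p * y q = x p * x q) :
    s.EqOn y x ∨ s.EqOn y (fun p => -x p) := by
  by_cases hx : ∀ p ∈ s, x p = 0
  · left
    intro p hp
    rw [hx p hp]
    simpa [hx p hp] using h p hp p hp
  push Not at hx
  obtain ⟨p₀, hp₀, hxp₀⟩ := hx
  have cancel (c : R) (hc2 : c * c = 1) (hc : y p₀ = c * x p₀) : s.EqOn y (fun q => c * x q) :=
    fun q hq => mul_left_cancel₀ hxp₀ <| by
      linear_combination c * h p₀ hp₀ q hq - c * y q * hc - x p₀ * y q * hc2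
  rcases mul_self_eq_mul_self_iff.mp (h p₀ hp₀ p₀ hp₀) with hy | hy
  · exact .inl fun q hq => by simpa using cancel 1 (mul_one 1) (by rw [hy, one_mul]) hq
  · exact .inr fun q hq => by simpa using cancel (-1) (by norm_num) (by rw [hy, neg_one_mul]) hq

section Toeplitz

variable [CommRing R]

theorem sum_range_succ_mul_shift_add_one (N : ℕ) (a : ℤ → R) (x y : ℤ) :
    ∑ m ∈ range (N + 1), a (x + 1 - m) * a (y + 1 - m) =
      ∑ m ∈ range (N + 1), a (x - m) * a (y - m) + a (x + 1) * a (y + 1) -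
        a (x - N) * a (y - N) := by
  rw [sum_range_succ', sum_range_succ]
  simp only [Nat.cast_add, Nat.cast_one, Nat.cast_zero, sub_zero, add_sub_add_right_eq_sub]
  ring

variable {a : ℤ → R}

section

variable {n : ℕ} {T : Matrix (Fin n) (Fin n) R}

theorem toeplitz_mul_transpose_apply (hT : ∀ j k : Fin n, T j k = a ((j : ℤ) - (k : ℤ)))
    (j k : Fin n) : (T * Tᵀ) j k = ∑ m ∈ range n, a (j - m) * a (k - m) := by
  rw [mul_apply, ← Fin.sum_univ_eq_sum_range (fun m : ℕ => a (j - m) * a (k - m))]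
  simp only [transpose_apply, hT]

theorem transpose_mul_toeplitz_apply (hT : ∀ j k : Fin n, T j k = a ((j : ℤ) - (k : ℤ)))
    (j k : Fin n) : (Tᵀ * T) j k = ∑ m ∈ range n, a (m - j) * a (m - k) := by
  have hTt : ∀ j k : Fin n, Tᵀ j k = a (-((j : ℤ) - (k : ℤ))) := fun j k => by
    rw [transpose_apply, hT, neg_sub]
  simpa only [transpose_transpose, neg_sub] using
    toeplitz_mul_transpose_apply (a := fun i => a (-i)) hTt j k

end

variable {N : ℕ} {T : Matrix (Fin (N + 1)) (Fin (N + 1)) R}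

theorem normal_toeplitz_mul_add_mul (hT : ∀ j k : Fin (N + 1), T j k = a ((j : ℤ) - (k : ℤ)))
    (hnormal : T * Tᵀ = Tᵀ * T) {p q : ℤ}
    (hp : p ∈ Set.Icc 1 (N : ℤ)) (hq : q ∈ Set.Icc 1 (N : ℤ)) :
    a p * a q + a (N + 1 - p) * a (N + 1 - q) =
      a (-p) * a (-q) + a (p - N - 1) * a (q - N - 1) := by
  have entry_eq (x y : ℕ) (hx : x ≤ N) (hy : y ≤ N) :
      ∑ m ∈ range (N + 1), a (x - m) * a (y - m) =
        ∑ m ∈ range (N + 1), a (m - x) * a (m - y) := by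
    have h := congrFun₂ hnormal ⟨x, Nat.lt_succ_of_le hx⟩ ⟨y, Nat.lt_succ_of_le hy⟩
    rwa [toeplitz_mul_transpose_apply hT, transpose_mul_toeplitz_apply hT] at h
  obtain ⟨x, rfl⟩ : ∃ x : ℕ, p = x + 1 := ⟨(p - 1).toNat, by grind⟩
  obtain ⟨y, rfl⟩ : ∃ y : ℕ, q = y + 1 := ⟨(q - 1).toNat, by grind⟩
  have shifted := entry_eq (x + 1) (y + 1) (by grind) (by grind)
  have shift_neg := sum_range_succ_mul_shift_add_one N (fun i => a (-i)) x y
  simp only [neg_sub] at shift_neg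
  push_cast at shifted
  rw [sum_range_succ_mul_shift_add_one, shift_neg, entry_eq x y (by grind) (by grind)] at shifted
  rw [show (N : ℤ) + 1 - (x + 1) = N - x by ring, show (N : ℤ) + 1 - (y + 1) = N - y by ring,
    show (x : ℤ) + 1 - N - 1 = x - N by ring, show (y : ℤ) + 1 - N - 1 = y - N by ring]
  linear_combination shifted

theorem normal_toeplitz_mul_eq_mul (hT : ∀ j k : Fin (N + 1), T j k = a ((j : ℤ) - (k : ℤ)))
    (hnormal : T * Tᵀ = Tᵀ * T) {ε : R} (hε : ε * ε = 1) {p q : ℤ}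
    (hp : p ∈ Set.Icc 1 (N : ℤ)) (hq : q ∈ Set.Icc 1 (N : ℤ)) :
    (a (-p) + ε * a (p - N - 1)) * (a (-q) + ε * a (q - N - 1)) =
      (a p + ε * a (N + 1 - p)) * (a q + ε * a (N + 1 - q)) := by
  have hq' : N + 1 - q ∈ Set.Icc 1 (N : ℤ) := by grind
  have reflected := normal_toeplitz_mul_add_mul hT hnormal hp hq'
  rw [show (N : ℤ) + 1 - (N + 1 - q) = q by ring, show -((N : ℤ) + 1 - q) = q - N - 1 by ring,
    show (N : ℤ) + 1 - q - N - 1 = -q by ring] at reflected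
  linear_combination (-1 : R) * normal_toeplitz_mul_add_mul hT hnormal hp hq - ε * reflected +
    (a (p - N - 1) * a (q - N - 1) - a (N + 1 - p) * a (N + 1 - q)) * hε

end Toeplitz

theorem real_normal_toeplitz_four_types_general (N : ℕ) (a : ℤ → ℝ)
    (T : Matrix (Fin (N + 1)) (Fin (N + 1)) ℝ)
    (hT : ∀ j k : Fin (N + 1), T j k = a ((j : ℤ) - (k : ℤ)))
    (hnormal : T * Tᵀ = Tᵀ * T) :
    (∀ k : ℤ, 1 ≤ k → k ≤ N → a (-k) = a k) ∨
    (∀ k : ℤ, 1 ≤ k → k ≤ N → a (-k) = -a k) ∨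
    (∀ k : ℤ, 1 ≤ k → k ≤ N → a (-k) = a ((N : ℤ) + 1 - k)) ∨
    (∀ k : ℤ, 1 ≤ k → k ≤ N → a (-k) = -a ((N : ℤ) + 1 - k)) := by
  have signs (ε : ℝ) (hε : ε * ε = 1) := Set.eqOn_or_eqOn_neg_of_mul_eq_mul
    (x := fun p => a p + ε * a (N + 1 - p)) (y := fun p => a (-p) + ε * a (p - N - 1))
    fun _ hp _ hq => normal_toeplitz_mul_eq_mul hT hnormal hε hp hq
  rcases signs 1 (by norm_num) with hsum | hsum <;>
    rcases signs (-1) (by norm_num) with hdiff | hdiff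
  · refine .inl fun k hk1 hkN => ?_
    linarith [hsum ⟨hk1, hkN⟩, hdiff ⟨hk1, hkN⟩]
  · refine .inr <| .inr <| .inl fun k hk1 hkN => ?_
    linarith [hsum ⟨hk1, hkN⟩, hdiff ⟨hk1, hkN⟩]
  · refine .inr <| .inr <| .inr fun k hk1 hkN => ?_
    linarith [hsum ⟨hk1, hkN⟩, hdiff ⟨hk1, hkN⟩]
  · refine .inr <| .inl fun k hk1 hkN => ?_
    linarith [hsum ⟨hk1, hkN⟩, hdiff ⟨hk1, hkN⟩]

theorem real_normal_toeplitz_four_types (N : ℕ) (hN : 1 ≤ N) (a : ℤ → ℝ)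
    (T : Matrix (Fin (N + 1)) (Fin (N + 1)) ℝ)
    (hT : ∀ j k : Fin (N + 1), T j k = a ((j : ℤ) - (k : ℤ)))
    (hnormal : T * Tᵀ = Tᵀ * T) :
    (∀ k : ℤ, 1 ≤ k → k ≤ N → a (-k) = a k) ∨
    (∀ k : ℤ, 1 ≤ k → k ≤ N → a (-k) = -a k) ∨
    (∀ k : ℤ, 1 ≤ k → k ≤ N → a (-k) = a ((N : ℤ) + 1 - k)) ∨
    (∀ k : ℤ, 1 ≤ k → k ≤ N → a (-k) = -a ((N : ℤ) + 1 - k)) :=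
  real_normal_toeplitz_four_types_general N a T hT hnormal
end

section
/- Let N ≥ 1 and let a : ℤ → ℂ. Suppose there exists α₀ ∈ ℂ with |α₀| = 1 such that a(-k) = α₀ * conj(a k) for all 1 ≤ k ≤ N (type I). Then the (N+1)×(N+1) Toeplitz matrix T with entries T j k = a (j - k) is normal: T * Tᴴ = Tᴴ * T. -/
open Matrix

/-!
Write `a(-m) = α ā(m)` for the type I relation. Conjugating it and using `α ᾱ = 1` shows that it
holds for negative `m` as well, i.e. for every nonzero `m` with `|m| ≤ N`. Entry `(j, k)` of `T Tᴴ`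
is `∑ₓ a(j - x) ā(k - x)` and that of `Tᴴ T` is `∑ₓ ā(x - j) a(x - k)`; rewriting `a(j - x)` and
`a(x - k)` by the relation makes the terms with `x ≠ j, k` agree, while the terms `x = j` and
`x = k` (where `a 0` occurs, on which the relation says nothing) are exchanged by the transposition
of `j` and `k`.
-/

theorem apply_neg_eq_mul_star_of_abs_le {R : Type*} [CommSemiring R] [StarRing R] {α : R}
    (hα : α * star α = 1) {a : ℤ → R} {N : ℤ} (h : ∀ k : ℤ, 1 ≤ k → k ≤ N → a (-k) = α * star (a k)) {m : ℤ} (hm : m ≠ 0)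
    (hmN : |m| ≤ N) : a (-m) = α * star (a m) := by
  rcases hm.lt_or_gt with hneg | hpos
  · have hrel := h (-m) (by omega) (by rwa [abs_of_neg hneg] at hmN)
    rw [neg_neg] at hrel
    rw [hrel, star_mul', star_star, ← mul_assoc, hα, one_mul]
  · exact h m hpos (by rwa [abs_of_pos hpos] at hmN)

namespace Matrix

variable {R : Type*}

def toeplitz (n : ℕ) (a : ℤ → R) : Matrix (Fin n) (Fin n) R :=
  of fun j k => a ((j : ℤ) - k)

@[simp]
theorem toeplitz_apply (n : ℕ) (a : ℤ → R) (j k : Fin n) : toeplitz n a j k = a ((j : ℤ) - k) :=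
  rfl

variable [CommSemiring R] [StarRing R]

theorem toeplitz_mul_conjTranspose_comm {n : ℕ} {α : R} {a : ℤ → R}
    (ha : ∀ m : ℤ, m ≠ 0 → |m| < n → a (-m) = α * star (a m)) :
    toeplitz n a * (toeplitz n a)ᴴ = (toeplitz n a)ᴴ * toeplitz n a := by
  ext j k
  simp only [mul_apply, conjTranspose_apply, toeplitz_apply]
  refine Fintype.sum_equiv (Equiv.swap j k) _ _ fun x => ?_
  have hdiff : ∀ y z : Fin n, |(y : ℤ) - z| < n := fun y z => by
    rw [abs_lt]; constructor <;> omega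
  have hrel : ∀ y z : Fin n, y ≠ z → a ((y : ℤ) - z) = α * star (a ((z : ℤ) - y)) := by
    intro y z hyz
    rw [← ha _ (by omega) (hdiff z y), neg_sub]
  by_cases hxj : x = j
  · subst hxj
    rw [Equiv.swap_apply_left, sub_self, sub_self, mul_comm]
  by_cases hxk : x = k
  · subst hxk
    rw [Equiv.swap_apply_right, sub_self, sub_self, mul_comm]
  rw [Equiv.swap_apply_of_ne_of_ne hxj hxk, hrel j x (Ne.symm hxj), hrel x k hxk]
  ring

end Matrix

theorem typeI_toeplitz_is_normal_general (N : ℕ) (a : ℤ → ℂ)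
    (T : Matrix (Fin (N + 1)) (Fin (N + 1)) ℂ)
    (hT : ∀ j k : Fin (N + 1), T j k = a ((j : ℤ) - (k : ℤ)))
    (h : ∃ α₀ : ℂ, ‖α₀‖ = 1 ∧
      ∀ k : ℤ, 1 ≤ k → k ≤ N → a (-k) = α₀ * (starRingEnd ℂ) (a k)) :
    T * Tᴴ = Tᴴ * T := by
  obtain ⟨α₀, hα, hrel⟩ := h
  obtain rfl : T = toeplitz (N + 1) a := ext hT
  have hα' : α₀ * star α₀ = 1 := by
    rw [Complex.star_def, Complex.mul_conj', hα]
    norm_num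
  exact toeplitz_mul_conjTranspose_comm fun m hm hmN =>
    apply_neg_eq_mul_star_of_abs_le hα' hrel hm (by push_cast at hmN; omega)

theorem typeI_toeplitz_is_normal (N : ℕ) (hN : 1 ≤ N) (a : ℤ → ℂ)
    (T : Matrix (Fin (N + 1)) (Fin (N + 1)) ℂ)
    (hT : ∀ j k : Fin (N + 1), T j k = a ((j : ℤ) - (k : ℤ)))
    (h : ∃ α₀ : ℂ, ‖α₀‖ = 1 ∧
      ∀ k : ℤ, 1 ≤ k → k ≤ N → a (-k) = α₀ * (starRingEnd ℂ) (a k)) :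
    T * Tᴴ = Tᴴ * T :=
  typeI_toeplitz_is_normal_general N a T hT h
end

section
/- Let N ≥ 1 and let a : ℤ → ℂ. Suppose there exists β₀ ∈ ℂ with |β₀| = 1 such that a(-k) = β₀ * a(N + 1 - k) for all 1 ≤ k ≤ N (type II). Then the (N+1)×(N+1) Toeplitz matrix T with entries T j k = a (j - k) is normal: T * Tᴴ = Tᴴ * T. -/
/-!
A type-II Toeplitz matrix is a `β`-circulant: going once around the cycle of indices multiplies
the entries by `β`. If `γ ^ (N + 1) = conj β`, conjugating by the unitary diagonal matrix
`diag (γ ^ j)` spreads this factor evenly and turns `T` into an ordinary circulant matrix.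
Circulant matrices commute with each other, and the adjoint of a circulant is again circulant,
so circulants are normal; normality is preserved by unitary conjugation.
-/

open Matrix

theorem IsStarNormal.conjugate_of_mem_unitary {R : Type*} [Monoid R] [StarMul R] {u c : R}
    (hu : u ∈ unitary R) (hc : IsStarNormal c) : IsStarNormal (u * c * star u) := by
  refine ⟨?_⟩
  simp only [Commute, SemiconjBy, star_mul, star_star, mul_assoc]
  simp only [← mul_assoc (star u) u, Unitary.star_mul_self_of_mem hu, one_mul]
  rw [← mul_assoc (star c) c, hc.star_comm_self.eq, mul_assoc]

namespace Matrix

variable {ι R : Type*} [Fintype ι] [CommSemiring R] [StarRing R]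

theorem isStarNormal_circulant [AddCommGroup ι] (v : ι → R) : IsStarNormal (circulant v) :=
  ⟨by rw [star_eq_conjTranspose, conjTranspose_circulant]; exact circulant_mul_comm _ _⟩

theorem diagonal_mem_unitary [DecidableEq ι] {d : ι → R} (hd : ∀ i, d i ∈ unitary R) :
    diagonal d ∈ unitary (Matrix ι ι R) := by
  simp only [Unitary.mem_iff, star_eq_conjTranspose, diagonal_conjTranspose, diagonal_mul_diagonal,
    ← diagonal_one]
  exact ⟨congrArg diagonal (funext fun i => Unitary.star_mul_self_of_mem (hd i)),
    congrArg diagonal (funext fun i => Unitary.mul_star_self_of_mem (hd i))⟩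

end Matrix

theorem toeplitz_eq_diagonal_mul_circulant_mul_star {R : Type*} [CommSemiring R] [StarRing R]
    {N : ℕ} {a : ℤ → R} {β γ : R} (hγ : γ ∈ unitary R) (hγβ : star γ ^ (N + 1) = β)
    (ha : ∀ k : ℤ, 1 ≤ k → k ≤ N → a (-k) = β * a ((N : ℤ) + 1 - k)) :
    of (fun j k : Fin (N + 1) => a ((j : ℤ) - (k : ℤ))) =
      diagonal (fun j : Fin (N + 1) => γ ^ (j : ℕ)) *
        circulant (fun m : Fin (N + 1) => star γ ^ (m : ℕ) * a (m : ℤ)) *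
        star (diagonal (fun j : Fin (N + 1) => γ ^ (j : ℕ))) := by
  ext j k
  simp only [star_eq_conjTranspose, diagonal_conjTranspose, diagonal_mul, mul_diagonal, of_apply,
    circulant_apply, Pi.star_apply, star_pow]
  have hpow (n : ℕ) : γ ^ n * star γ ^ n = 1 := by
    rw [← mul_pow, Unitary.mul_star_self_of_mem hγ, one_pow]
  rcases le_or_gt k j with hkj | hjk
  · have hk : (k : ℕ) ≤ j := hkj
    have hexp : star γ ^ (j - k : ℕ) * star γ ^ (k : ℕ) = star γ ^ (j : ℕ) := by
      rw [← pow_add, Nat.sub_add_cancel hk]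
    rw [Fin.coe_sub_iff_le.mpr hkj, Nat.cast_sub hk]
    calc a ((j : ℤ) - k)
        = γ ^ (j : ℕ) * (star γ ^ (j - k : ℕ) * star γ ^ (k : ℕ)) * a ((j : ℤ) - k) := by
          rw [hexp, hpow, one_mul]
      _ = _ := by ring
  · have hj : (j : ℕ) < k := hjk
    have hk := k.isLt
    have hexp :
        star γ ^ (N + 1 + j - k : ℕ) * star γ ^ (k : ℕ) = β * star γ ^ (j : ℕ) := by
      rw [← pow_add, Nat.sub_add_cancel (by omega), pow_add, hγβ]
    have harg : (N : ℤ) + 1 + j - k = N + 1 - (k - j) := by ring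
    rw [Fin.coe_sub_iff_lt.mpr hjk, Nat.cast_sub (by omega), Nat.cast_add, Nat.cast_add,
      Nat.cast_one]
    calc a ((j : ℤ) - k)
        = γ ^ (j : ℕ) * star γ ^ (j : ℕ) * (β * a ((N : ℤ) + 1 - (k - j))) := by
          rw [hpow, one_mul, ← ha _ (by omega) (by omega), neg_sub]
      _ = γ ^ (j : ℕ) * (star γ ^ (N + 1 + j - k : ℕ) * star γ ^ (k : ℕ)) *
            a ((N : ℤ) + 1 + j - k) := by
          rw [hexp, harg]; ring
      _ = _ := by ring

theorem typeII_toeplitz_is_normal_general (N : ℕ) (a : ℤ → ℂ)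
    (T : Matrix (Fin (N + 1)) (Fin (N + 1)) ℂ)
    (hT : ∀ j k : Fin (N + 1), T j k = a ((j : ℤ) - (k : ℤ)))
    (h : ∃ β₀ : ℂ, ‖β₀‖ = 1 ∧
      ∀ k : ℤ, 1 ≤ k → k ≤ N → a (-k) = β₀ * a ((N : ℤ) + 1 - k)) :
    T * Tᴴ = Tᴴ * T := by
  obtain ⟨β, hβ, ha⟩ := h
  obtain ⟨γ, hγβ⟩ := IsAlgClosed.exists_pow_nat_eq (star β) N.succ_pos
  have hγ_norm : ‖γ‖ = 1 := by
    rw [← pow_eq_one_iff_of_nonneg (norm_nonneg γ) N.succ_ne_zero, ← norm_pow, hγβ,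
      norm_star, hβ]
  have hγ : γ ∈ unitary ℂ := by
    rw [Unitary.mem_iff_self_mul_star]
    exact_mod_cast (RCLike.mul_conj γ).trans (by rw [hγ_norm]; norm_num)
  have hT_eq : T = of fun j k : Fin (N + 1) => a ((j : ℤ) - (k : ℤ)) := ext hT
  have hγβ' : star γ ^ (N + 1) = β := by rw [← star_pow, hγβ, star_star]
  rw [hT_eq, toeplitz_eq_diagonal_mul_circulant_mul_star hγ hγβ' ha]
  exact (IsStarNormal.conjugate_of_mem_unitary (diagonal_mem_unitary fun j => pow_mem hγ _)
    (isStarNormal_circulant _)).star_comm_self.symm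

theorem typeII_toeplitz_is_normal (N : ℕ) (hN : 1 ≤ N) (a : ℤ → ℂ)
    (T : Matrix (Fin (N + 1)) (Fin (N + 1)) ℂ)
    (hT : ∀ j k : Fin (N + 1), T j k = a ((j : ℤ) - (k : ℤ)))
    (h : ∃ β₀ : ℂ, ‖β₀‖ = 1 ∧
      ∀ k : ℤ, 1 ≤ k → k ≤ N → a (-k) = β₀ * a ((N : ℤ) + 1 - k)) :
    T * Tᴴ = Tᴴ * T :=
  typeII_toeplitz_is_normal_general N a T hT h
end

section
/- Let N ≥ 1 and let a : ℤ → ℂ. Define trigonometric polynomials s(x) = ∑_{k=1}^{N} a k * exp(i k x) and t(x) = ∑_{k=1}^{N} a (-k) * exp(-i k x) for x ∈ ℝ. Then the following are equivalent: (i) for all m, n with 1 ≤ m, n ≤ N, a m * conj(a n) - conj(a (-m)) * a (-n) + conj(a (N+1-m)) * a (N+1-n) - a (-(N+1-m)) * conj(a (-(N+1-n))) = 0; (ii) for all real x and y, s(x) * conj(s(y)) - conj(t(x)) * t(y) + conj(s(x)) * s(y) * exp(i (N+1) (x - y)) - t(x) * conj(t(y)) * exp(i (N+1) (x - y)) = 0.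 -/
/-!
Multiplying by `e^{i(N+1)x}` reflects the frequencies `k ↦ N + 1 - k`, so `conj (s x) e^{i(N+1)x}`
and `t x e^{i(N+1)x}` are again sums of `e^{ikx}`, `1 ≤ k ≤ N`, as are `s x` and `conj (t x)`.
Hence the expression in (ii) is a Hermitian form `∑ c m n e^{imx} e^{-iny}` whose coefficient
`c m n` is the left side of (i), and such a double sum vanishes identically only if all its
coefficients do: a polynomial vanishing on the unit circle is zero.
-/

open Finset Complex Polynomial ComplexConjugate

noncomputable def trigSum (s : Finset ℕ) (c : ℕ → ℂ) (x : ℝ) : ℂ :=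
  ∑ k ∈ s, c k * exp (I * k * x)

lemma infinite_range_exp_I_mul : (Set.range fun x : ℝ => exp (I * x)).Infinite := by
  refine Set.infinite_of_injOn_mapsTo (s := Set.Ioc (-Real.pi) Real.pi) ?_
    (Set.mapsTo_range _ _) (Set.Ioc_infinite (by linarith [Real.pi_pos]))
  intro x hx y hy hxy
  have h := exp_inj_of_neg_pi_lt_of_le_pi (by simpa using hx.1) (by simpa using hx.2)
    (by simpa using hy.1) (by simpa using hy.2) hxy
  simpa using congrArg im h

lemma trigSum_eq_eval (s : Finset ℕ) (c : ℕ → ℂ) (x : ℝ) :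
    trigSum s c x = (∑ k ∈ s, C (c k) * X ^ k).eval (exp (I * x)) := by
  simp only [trigSum, eval_finsetSum, eval_mul, eval_C, eval_pow, eval_X, ← exp_nat_mul]
  congr! 3
  ring

lemma trigSum_eq_zero_iff {s : Finset ℕ} {c : ℕ → ℂ} :
    (∀ x, trigSum s c x = 0) ↔ ∀ k ∈ s, c k = 0 := by
  refine ⟨fun h k hk => ?_, fun h x => sum_eq_zero fun k hk => by rw [h k hk, zero_mul]⟩
  set p : ℂ[X] := ∑ k ∈ s, C (c k) * X ^ k
  have hp : p = 0 := by
    refine eq_zero_of_infinite_isRoot p (infinite_range_exp_I_mul.mono ?_)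
    rintro _ ⟨x, rfl⟩
    simpa [IsRoot, trigSum_eq_eval] using h x
  simpa [p, finsetSum_coeff, coeff_C_mul_X_pow, hk] using congrArg (coeff · k) hp

lemma Finset.sum_Icc_one_reflect {M : Type*} [AddCommMonoid M] (f : ℕ → M) (N : ℕ) :
    ∑ k ∈ Icc 1 N, f (N + 1 - k) = ∑ k ∈ Icc 1 N, f k := by
  refine sum_nbij' (fun k => N + 1 - k) (fun k => N + 1 - k) ?_ ?_ ?_ ?_ ?_ <;>
    intro k hk <;> simp only [mem_Icc] at hk ⊢ <;> omega

lemma sum_sum_exp_eq_zero_iff {s : Finset ℕ} {c : ℕ → ℕ → ℂ} :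
    (∀ x y : ℝ, ∑ m ∈ s, ∑ n ∈ s, c m n * (exp (I * m * x) * exp (-(I * n * y))) = 0) ↔
      ∀ m ∈ s, ∀ n ∈ s, c m n = 0 := by
  have hsum (x y : ℝ) : ∑ m ∈ s, ∑ n ∈ s, c m n * (exp (I * m * x) * exp (-(I * n * y))) =
      trigSum s (fun n => trigSum s (fun m => c m n) x) (-y) := by
    simp only [trigSum, sum_mul, ofReal_neg, mul_neg]
    rw [sum_comm]
    simp only [mul_assoc]
  simp only [hsum]
  refine ⟨fun h m hm n hn => ?_, fun h x y => ?_⟩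
  · have hrow (x : ℝ) := trigSum_eq_zero_iff.mp (fun y => by simpa using h x (-y)) n hn
    exact trigSum_eq_zero_iff.mp hrow m hm
  · exact trigSum_eq_zero_iff.mpr (fun n hn => trigSum_eq_zero_iff.mpr (fun m hm => h m hm n hn) x) _

lemma conj_exp_I_mul_natCast_mul (k : ℕ) (x : ℝ) : conj (exp (I * k * x)) = exp (-(I * k * x)) := by
  rw [← exp_conj]
  simp

lemma trigSum_mul_conj_trigSum (s : Finset ℕ) (p q : ℕ → ℂ) (x y : ℝ) :
    trigSum s p x * conj (trigSum s q y) =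
      ∑ m ∈ s, ∑ n ∈ s, p m * conj (q n) * (exp (I * m * x) * exp (-(I * n * y))) := by
  simp only [trigSum, map_sum, map_mul, sum_mul_sum, conj_exp_I_mul_natCast_mul]
  refine sum_congr rfl fun m _ => sum_congr rfl fun n _ => ?_
  ring

lemma conj_trigSum_conj (s : Finset ℕ) (c : ℕ → ℂ) (x : ℝ) :
    conj (trigSum s (fun k => conj (c k)) x) = ∑ k ∈ s, c k * exp (-(I * k * x)) := by
  simp only [trigSum, map_sum, map_mul, conj_conj, conj_exp_I_mul_natCast_mul]

lemma conj_trigSum_mul_exp (N : ℕ) (c : ℕ → ℂ) (x : ℝ) :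
    conj (trigSum (Icc 1 N) c x) * exp (I * (N + 1) * x) =
      trigSum (Icc 1 N) (fun m => conj (c (N + 1 - m))) x := by
  rw [trigSum, trigSum, map_sum, sum_mul, ← sum_Icc_one_reflect]
  refine sum_congr rfl fun k hk => ?_
  have hk : k ≤ N + 1 := by simp only [mem_Icc] at hk; omega
  rw [map_mul, conj_exp_I_mul_natCast_mul, mul_assoc, ← exp_add]
  push_cast [Nat.cast_sub hk]
  ring_nf

lemma conj_trigSum_mul_trigSum_mul_exp (N : ℕ) (c : ℕ → ℂ) (x y : ℝ) :
    conj (trigSum (Icc 1 N) c x) * trigSum (Icc 1 N) c y * exp (I * (N + 1) * (x - y)) =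
      trigSum (Icc 1 N) (fun m => conj (c (N + 1 - m))) x *
        conj (trigSum (Icc 1 N) (fun m => conj (c (N + 1 - m))) y) := by
  rw [← conj_trigSum_mul_exp, ← conj_trigSum_mul_exp, map_mul, conj_conj, ← Nat.cast_succ,
    conj_exp_I_mul_natCast_mul, mul_sub, sub_eq_add_neg, exp_add]
  ring

theorem condition_iff_trig_identity_general (N : ℕ) (a : ℤ → ℂ)
    (s t : ℝ → ℂ)
    (hs : ∀ x : ℝ, s x = ∑ k ∈ Finset.Icc 1 N, a (k : ℤ) * Complex.exp (Complex.I * (k : ℂ) * (x : ℂ)))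
    (ht : ∀ x : ℝ, t x = ∑ k ∈ Finset.Icc 1 N, a (-(k : ℤ)) * Complex.exp (-(Complex.I * (k : ℂ) * (x : ℂ)))) :
    (∀ m n : ℤ, 1 ≤ m → m ≤ N → 1 ≤ n → n ≤ N →
        a m * (starRingEnd ℂ) (a n) - (starRingEnd ℂ) (a (-m)) * a (-n)
          + (starRingEnd ℂ) (a ((N : ℤ) + 1 - m)) * a ((N : ℤ) + 1 - n)
          - a (-((N : ℤ) + 1 - m)) * (starRingEnd ℂ) (a (-((N : ℤ) + 1 - n))) = 0) ↔
    (∀ x y : ℝ,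
        s x * (starRingEnd ℂ) (s y) - (starRingEnd ℂ) (t x) * t y
          + (starRingEnd ℂ) (s x) * s y * Complex.exp (Complex.I * ((N : ℂ) + 1) * ((x : ℂ) - (y : ℂ)))
          - t x * (starRingEnd ℂ) (t y) * Complex.exp (Complex.I * ((N : ℂ) + 1) * ((x : ℂ) - (y : ℂ))) = 0) := by
  set p : ℕ → ℂ := fun k => a k
  set q : ℕ → ℂ := fun k => conj (a (-k))
  have hs' x : s x = trigSum (Icc 1 N) p x := hs x
  have ht' x : t x = conj (trigSum (Icc 1 N) q x) := (ht x).trans (conj_trigSum_conj _ _ x).symm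
  simp only [hs', ht', conj_conj, conj_trigSum_mul_trigSum_mul_exp, trigSum_mul_conj_trigSum,
    ← sum_sub_distrib, ← sum_add_distrib, ← sub_mul, ← add_mul]
  rw [sum_sum_exp_eq_zero_iff]
  have hreflect {k : ℕ} (hk : k ≤ N) : ((N + 1 - k : ℕ) : ℤ) = N + 1 - k := by omega
  constructor
  · intro h m hm n hn
    rw [mem_Icc] at hm hn
    simpa only [p, q, conj_conj, hreflect hm.2, hreflect hn.2] using
      h m n (by omega) (by omega) (by omega) (by omega)
  · intro h m n hm₁ hm₂ hn₁ hn₂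
    lift m to ℕ using by omega
    lift n to ℕ using by omega
    simpa only [p, q, conj_conj, hreflect (by omega : m ≤ N), hreflect (by omega : n ≤ N)] using
      h m (mem_Icc.mpr ⟨by omega, by omega⟩) n (mem_Icc.mpr ⟨by omega, by omega⟩)

theorem condition_iff_trig_identity (N : ℕ) (hN : 1 ≤ N) (a : ℤ → ℂ)
    (s t : ℝ → ℂ)
    (hs : ∀ x : ℝ, s x = ∑ k ∈ Finset.Icc 1 N, a (k : ℤ) * Complex.exp (Complex.I * (k : ℂ) * (x : ℂ)))
    (ht : ∀ x : ℝ, t x = ∑ k ∈ Finset.Icc 1 N, a (-(k : ℤ)) * Complex.exp (-(Complex.I * (k : ℂ) * (x : ℂ)))) :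
    (∀ m n : ℤ, 1 ≤ m → m ≤ N → 1 ≤ n → n ≤ N →
        a m * (starRingEnd ℂ) (a n) - (starRingEnd ℂ) (a (-m)) * a (-n)
          + (starRingEnd ℂ) (a ((N : ℤ) + 1 - m)) * a ((N : ℤ) + 1 - n)
          - a (-((N : ℤ) + 1 - m)) * (starRingEnd ℂ) (a (-((N : ℤ) + 1 - n))) = 0) ↔
    (∀ x y : ℝ,
        s x * (starRingEnd ℂ) (s y) - (starRingEnd ℂ) (t x) * t y
          + (starRingEnd ℂ) (s x) * s y * Complex.exp (Complex.I * ((N : ℂ) + 1) * ((x : ℂ) - (y : ℂ)))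
          - t x * (starRingEnd ℂ) (t y) * Complex.exp (Complex.I * ((N : ℂ) + 1) * ((x : ℂ) - (y : ℂ))) = 0) :=
  condition_iff_trig_identity_general N a s t hs ht
end

section
/- Let N ≥ 1 and let a : ℤ → ℂ. Define s(x) = ∑_{k=1}^{N} a k * exp(i k x) and t(x) = ∑_{k=1}^{N} a (-k) * exp(-i k x). If the (N+1)×(N+1) Toeplitz matrix T with entries T j k = a (j - k) is normal (T * Tᴴ = Tᴴ * T), then |s(x)| = |t(x)| for every real x. -/
/-!
Expanding the squares, `‖s x‖² - ‖t x‖² = ∑_{k,m} c k m * exp (i (k - m) x)` with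
`c k m = a k * conj (a m) - a (-m) * conj (a (-k))`, so it suffices that `c` sums to zero along
each diagonal `k - m = d`. For `d ≥ 0` this is the `(d, 0)` entry of `T * Tᴴ = Tᴴ * T`: both sides
are sums of `g l = a l * conj (a (l - d))`, over `l` resp. over `d - l` for `0 ≤ l ≤ N`, and after
cancelling the terms with `l ≤ d`, which agree by reflection, what remains is the diagonal sum.
For `d < 0` it follows by conjugation, since `c m k = conj (c k m)`.
-/

open Matrix Finset ComplexConjugate

lemma sum_Icc_one_eq_sum_range {M : Type*} [AddCommMonoid M] (f : ℕ → M) (n : ℕ) :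
    ∑ m ∈ Icc 1 n, f m = ∑ m ∈ range n, f (m + 1) := by
  rw [range_eq_Ico, sum_Ico_add', zero_add, Ico_add_one_right_eq_Icc]

lemma sum_mul_comp_eq_zero_of_sum_fiber_eq_zero {α β R : Type*} [DecidableEq β] [CommSemiring R]
    (s : Finset α) (f : α → R) (g : α → β) (h : β → R)
    (hf : ∀ b, ∑ x ∈ s with g x = b, f x = 0) : ∑ x ∈ s, f x * h (g x) = 0 := by
  rw [← sum_fiberwise_of_maps_to fun x hx => mem_image_of_mem g hx]
  refine sum_eq_zero fun b _ => ?_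
  rw [sum_congr rfl fun x hx => by rw [(mem_filter.1 hx).2], ← sum_mul, hf, zero_mul]

lemma sum_Icc_product_filter_sub_eq_natCast {M : Type*} [AddCommMonoid M] (f : ℕ → ℕ → M)
    (N e : ℕ) :
    ∑ p ∈ Icc 1 N ×ˢ Icc 1 N with (p.1 : ℤ) - p.2 = e, f p.1 p.2 =
      ∑ m ∈ Icc 1 (N - e), f (m + e) m := by
  refine sum_nbij' Prod.snd (fun m => (m + e, m)) ?_ ?_ ?_ (fun _ _ => rfl) ?_
  all_goals simp only [mem_filter, mem_product, mem_Icc, Prod.forall, Prod.mk.injEq, and_true]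
  · intros; omega
  · intros; omega
  · intros; omega
  · rintro k m ⟨-, hkm⟩
    obtain rfl : k = m + e := by omega
    rfl

lemma sum_product_filter_sub_eq_neg {M : Type*} [AddCommMonoid M] (s : Finset ℕ)
    (f : ℕ → ℕ → M) (d : ℤ) :
    ∑ p ∈ s ×ˢ s with (p.1 : ℤ) - p.2 = -d, f p.1 p.2 =
      ∑ p ∈ s ×ˢ s with (p.1 : ℤ) - p.2 = d, f p.2 p.1 := by
  refine sum_nbij' Prod.swap Prod.swap ?_ ?_ (fun _ _ => rfl) (fun _ _ => rfl) (fun _ _ => rfl)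
  all_goals simp only [mem_filter, mem_product, Prod.forall, Prod.fst_swap, Prod.snd_swap]
  all_goals exact fun k m ⟨⟨hk, hm⟩, h⟩ => ⟨⟨hm, hk⟩, by omega⟩

open Complex in
lemma ofReal_norm_sq_sum_mul_exp (s : Finset ℕ) (c : ℕ → ℂ) (x : ℝ) :
    ((‖∑ k ∈ s, c k * exp (I * k * x)‖ ^ 2 : ℝ) : ℂ) =
      ∑ k ∈ s, ∑ m ∈ s, c k * conj (c m) * exp (I * ((k : ℤ) - m : ℤ) * x) := by
  rw [ofReal_pow, ← Complex.mul_conj', map_sum, sum_mul_sum]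
  refine sum_congr rfl fun k _ => sum_congr rfl fun m _ => ?_
  rw [map_mul, ← exp_conj, mul_mul_mul_comm, ← exp_add]
  congr 2
  simp only [map_mul, conj_I, conj_natCast, conj_ofReal]
  push_cast
  ring

def normSqDiffCoeff (a : ℤ → ℂ) (k m : ℕ) : ℂ :=
  a k * conj (a m) - a (-(m : ℤ)) * conj (a (-(k : ℤ)))

lemma normSqDiffCoeff_swap (a : ℤ → ℂ) (k m : ℕ) :
    normSqDiffCoeff a m k = conj (normSqDiffCoeff a k m) := by
  simp only [normSqDiffCoeff, map_sub, map_mul, Complex.conj_conj]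
  ring

open Complex in
lemma ofReal_norm_sq_sub_norm_sq_eq_sum (a : ℤ → ℂ) (s : Finset ℕ) (x : ℝ) :
    ((‖∑ k ∈ s, a k * exp (I * k * x)‖ ^ 2 -
        ‖∑ k ∈ s, a (-(k : ℤ)) * exp (-(I * k * x))‖ ^ 2 : ℝ) : ℂ) =
      ∑ p ∈ s ×ˢ s, normSqDiffCoeff a p.1 p.2 * exp (I * ((p.1 : ℤ) - p.2 : ℤ) * x) := by
  have hneg : ∀ k : ℕ, exp (-(I * k * x)) = exp (I * k * (-x : ℝ)) := fun k => by
    push_cast; ring_nf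
  simp only [hneg, ofReal_sub, ofReal_norm_sq_sum_mul_exp, sum_product]
  rw [sum_comm (s := s) (t := s) (f := fun k m => a (-(k : ℤ)) * _ * _), ← sum_sub_distrib]
  refine sum_congr rfl fun k _ => ?_
  rw [← sum_sub_distrib]
  refine sum_congr rfl fun m _ => ?_
  rw [normSqDiffCoeff, sub_mul]
  congr 3
  push_cast
  ring

section NormalToeplitz

variable {N : ℕ} {a : ℤ → ℂ} {T : Matrix (Fin (N + 1)) (Fin (N + 1)) ℂ}

lemma sum_range_mul_conj_eq_of_normal (hT : ∀ j k : Fin (N + 1), T j k = a ((j : ℤ) - (k : ℤ)))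
    (hnormal : T * Tᴴ = Tᴴ * T) {d : ℕ} (hd : d ≤ N) :
    ∑ l ∈ range (N + 1), a l * conj (a (l - d)) =
      ∑ l ∈ range (N + 1), a (d - l) * conj (a (-l)) := by
  have h := congr_fun₂ hnormal ⟨d, by omega⟩ 0
  simp only [mul_apply, conjTranspose_apply, hT, Fin.val_zero, Nat.cast_zero, zero_sub, sub_zero,
    RCLike.star_def] at h
  rw [Fin.sum_univ_eq_sum_range (fun l : ℕ => a (d - l) * conj (a (-l))),
    Fin.sum_univ_eq_sum_range (fun l : ℕ => conj (a (l - d)) * a l)] at h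
  simp only [h, mul_comm]

lemma sum_normSqDiffCoeff_eq_zero_of_normal
    (hT : ∀ j k : Fin (N + 1), T j k = a ((j : ℤ) - (k : ℤ))) (hnormal : T * Tᴴ = Tᴴ * T)
    (d : ℕ) : ∑ m ∈ Icc 1 (N - d), normSqDiffCoeff a (m + d) m = 0 := by
  rcases lt_or_ge N d with hNd | hd
  · simp [Nat.sub_eq_zero_of_le hNd.le]
  set g : ℤ → ℂ := fun u => a u * conj (a (u - d))
  have h : ∑ l ∈ range (N + 1), g l = ∑ l ∈ range (N + 1), g (d - l) := by
    simpa [g] using sum_range_mul_conj_eq_of_normal hT hnormal hd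
  have hhead : ∑ l ∈ range (d + 1), g (d - l) = ∑ l ∈ range (d + 1), g l := by
    rw [← sum_range_reflect (fun l : ℕ => g l)]
    refine sum_congr rfl fun l hl => ?_
    rw [Nat.add_sub_cancel, Nat.cast_sub (by simpa [Nat.lt_succ_iff] using hl)]
  rw [show N + 1 = (d + 1) + (N - d) by omega, sum_range_add _ (d + 1),
    sum_range_add _ (d + 1), hhead, add_right_inj] at h
  rw [sum_Icc_one_eq_sum_range, ← sub_eq_zero.mpr h, ← sum_sub_distrib]
  refine sum_congr rfl fun m _ => ?_
  simp only [normSqDiffCoeff, g]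
  push_cast
  ring_nf

lemma sum_filter_normSqDiffCoeff_eq_zero_of_normal
    (hT : ∀ j k : Fin (N + 1), T j k = a ((j : ℤ) - (k : ℤ))) (hnormal : T * Tᴴ = Tᴴ * T)
    (d : ℤ) :
    ∑ p ∈ Icc 1 N ×ˢ Icc 1 N with (p.1 : ℤ) - p.2 = d, normSqDiffCoeff a p.1 p.2 = 0 := by
  obtain ⟨e, rfl | rfl⟩ := Int.eq_nat_or_neg d
  · rw [sum_Icc_product_filter_sub_eq_natCast]
    exact sum_normSqDiffCoeff_eq_zero_of_normal hT hnormal e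
  · rw [sum_product_filter_sub_eq_neg,
      sum_Icc_product_filter_sub_eq_natCast (fun k m => normSqDiffCoeff a m k),
      sum_congr rfl fun m _ => normSqDiffCoeff_swap a (m + e) m, ← map_sum,
      sum_normSqDiffCoeff_eq_zero_of_normal hT hnormal e, map_zero]

end NormalToeplitz

theorem normal_toeplitz_abs_s_eq_abs_t_general (N : ℕ) (a : ℤ → ℂ)
    (s t : ℝ → ℂ)
    (hs : ∀ x : ℝ, s x = ∑ k ∈ Finset.Icc 1 N, a (k : ℤ) * Complex.exp (Complex.I * (k : ℂ) * (x : ℂ)))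
    (ht : ∀ x : ℝ, t x = ∑ k ∈ Finset.Icc 1 N, a (-(k : ℤ)) * Complex.exp (-(Complex.I * (k : ℂ) * (x : ℂ))))
    (T : Matrix (Fin (N + 1)) (Fin (N + 1)) ℂ)
    (hT : ∀ j k : Fin (N + 1), T j k = a ((j : ℤ) - (k : ℤ)))
    (hnormal : T * Tᴴ = Tᴴ * T) :
    ∀ x : ℝ, ‖s x‖ = ‖t x‖ := by
  intro x
  have hdiff : ((‖s x‖ ^ 2 - ‖t x‖ ^ 2 : ℝ) : ℂ) = 0 := by
    rw [hs, ht, ofReal_norm_sq_sub_norm_sq_eq_sum]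
    exact sum_mul_comp_eq_zero_of_sum_fiber_eq_zero _ _ (fun p : ℕ × ℕ => (p.1 : ℤ) - p.2)
      (fun d => Complex.exp (Complex.I * d * x))
      (sum_filter_normSqDiffCoeff_eq_zero_of_normal hT hnormal)
  have hsq : ‖s x‖ ^ 2 = ‖t x‖ ^ 2 := sub_eq_zero.mp (by exact_mod_cast hdiff)
  exact (pow_left_inj₀ (norm_nonneg _) (norm_nonneg _) two_ne_zero).mp hsq

theorem normal_toeplitz_abs_s_eq_abs_t (N : ℕ) (hN : 1 ≤ N) (a : ℤ → ℂ)
    (s t : ℝ → ℂ)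
    (hs : ∀ x : ℝ, s x = ∑ k ∈ Finset.Icc 1 N, a (k : ℤ) * Complex.exp (Complex.I * (k : ℂ) * (x : ℂ)))
    (ht : ∀ x : ℝ, t x = ∑ k ∈ Finset.Icc 1 N, a (-(k : ℤ)) * Complex.exp (-(Complex.I * (k : ℂ) * (x : ℂ))))
    (T : Matrix (Fin (N + 1)) (Fin (N + 1)) ℂ)
    (hT : ∀ j k : Fin (N + 1), T j k = a ((j : ℤ) - (k : ℤ)))
    (hnormal : T * Tᴴ = Tᴴ * T) :
    ∀ x : ℝ, ‖s x‖ = ‖t x‖ :=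
  normal_toeplitz_abs_s_eq_abs_t_general N a s t hs ht T hT hnormal
end

section
/- Let N ≥ 1 and let a : ℤ → ℂ. Define s(x) = ∑_{k=1}^{N} a k * exp(i k x) and t(x) = ∑_{k=1}^{N} a (-k) * exp(-i k x). Suppose that for all real x and y: s(x) * conj(s(y)) - conj(t(x)) * t(y) + conj(s(x)) * s(y) * exp(i (N+1) (x - y)) - t(x) * conj(t(y)) * exp(i (N+1) (x - y)) = 0. Let x₀ ∈ ℝ with t(x₀) ≠ 0, and let α, β ∈ ℂ with |α| = |β| = 1 satisfy s(x₀) = α * t(x₀) and t(x₀) = β * conj(t(x₀)). Then for every real x: (s(x) - α * exp(i (N+1) (x - x₀)) * t(x)) * (conj(s(x)) - conj(α) * conj(β) * t(x)) = 0. -/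
/-!
Only two instances of the identity are needed. On the diagonal `y = x` it says
`|s x| = |t x|`. At `y = x₀`, after substituting `s x₀ = α t x₀` and `t x₀ = β conj (t x₀)`
and cancelling `conj (t x₀)`, it becomes a linear relation between `s x`, `t x` and their
conjugates. Multiplying the claimed product by `β` and adding `t x` times that relation leaves
`β (|s x|² - |t x|²) = 0`.
-/

open ComplexConjugate

section StarRing

variable {R : Type*} [CommRing R] [StarRing R]

theorem linear_relation_of_cross_identity [IsDomain R] {S T S₀ T₀ E α β : R}
    (hcross : S * conj S₀ - conj T * T₀ + conj S * S₀ * E - T * conj T₀ * E = 0)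
    (hT₀ : T₀ ≠ 0) (hS₀ : S₀ = α * T₀) (hT₀β : T₀ = β * conj T₀) :
    conj α * S - β * conj T + α * β * E * conj S - E * T = 0 := by
  have hconjS₀ : conj S₀ = conj α * conj T₀ := by rw [hS₀, map_mul]
  refine mul_left_cancel₀ (by rwa [starRingEnd_apply, star_ne_zero] : conj T₀ ≠ 0) ?_
  linear_combination hcross - S * hconjS₀ + (conj T - conj S * α * E) * hT₀β
    - conj S * E * hS₀

theorem mul_eq_zero_of_linear_relation {S T E α β : R} (hST : S * conj S = T * conj T)
    (hlin : conj α * S - β * conj T + α * β * E * conj S - E * T = 0)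
    (hα : conj α * α = 1) (hβ : conj β * β = 1) :
    (S - α * E * T) * (conj S - conj α * conj β * T) = 0 := by
  have hβmul : β * ((S - α * E * T) * (conj S - conj α * conj β * T)) = 0 := by
    linear_combination β * hST - T * hlin + (-conj α * S * T + α * conj α * E * T ^ 2) * hβ
      + E * T ^ 2 * hα
  linear_combination conj β * hβmul - (S - α * E * T) * (conj S - conj α * conj β * T) * hβ

end StarRing

theorem Complex.conj_mul_eq_one_of_norm_eq_one {z : ℂ} (hz : ‖z‖ = 1) : conj z * z = 1 := by
  rw [Complex.conj_mul', hz]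
  norm_num

theorem trig_identity_factorization_general (N : ℕ)
    (s t : ℝ → ℂ)
    (hid : ∀ x y : ℝ,
        s x * (starRingEnd ℂ) (s y) - (starRingEnd ℂ) (t x) * t y
          + (starRingEnd ℂ) (s x) * s y * Complex.exp (Complex.I * ((N : ℂ) + 1) * ((x : ℂ) - (y : ℂ)))
          - t x * (starRingEnd ℂ) (t y) * Complex.exp (Complex.I * ((N : ℂ) + 1) * ((x : ℂ) - (y : ℂ))) = 0)
    (x₀ : ℝ) (hx₀ : t x₀ ≠ 0) (α β : ℂ)
    (hα : ‖α‖ = 1) (hβ : ‖β‖ = 1)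
    (hαt : s x₀ = α * t x₀) (hβt : t x₀ = β * (starRingEnd ℂ) (t x₀)) :
    ∀ x : ℝ,
      (s x - α * Complex.exp (Complex.I * ((N : ℂ) + 1) * ((x : ℂ) - (x₀ : ℂ))) * t x) *
        ((starRingEnd ℂ) (s x) - (starRingEnd ℂ) α * (starRingEnd ℂ) β * t x) = 0 := by
  intro x
  have hdiag : s x * conj (s x) = t x * conj (t x) := by
    have h := hid x x
    simp only [sub_self, mul_zero, Complex.exp_zero, mul_one] at h
    linear_combination h / 2
  exact mul_eq_zero_of_linear_relation hdiag
    (linear_relation_of_cross_identity (hid x x₀) hx₀ hαt hβt)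
    (Complex.conj_mul_eq_one_of_norm_eq_one hα) (Complex.conj_mul_eq_one_of_norm_eq_one hβ)

theorem trig_identity_factorization (N : ℕ) (hN : 1 ≤ N) (a : ℤ → ℂ)
    (s t : ℝ → ℂ)
    (hs : ∀ x : ℝ, s x = ∑ k ∈ Finset.Icc 1 N, a (k : ℤ) * Complex.exp (Complex.I * (k : ℂ) * (x : ℂ)))
    (ht : ∀ x : ℝ, t x = ∑ k ∈ Finset.Icc 1 N, a (-(k : ℤ)) * Complex.exp (-(Complex.I * (k : ℂ) * (x : ℂ))))
    (hid : ∀ x y : ℝ,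
        s x * (starRingEnd ℂ) (s y) - (starRingEnd ℂ) (t x) * t y
          + (starRingEnd ℂ) (s x) * s y * Complex.exp (Complex.I * ((N : ℂ) + 1) * ((x : ℂ) - (y : ℂ)))
          - t x * (starRingEnd ℂ) (t y) * Complex.exp (Complex.I * ((N : ℂ) + 1) * ((x : ℂ) - (y : ℂ))) = 0)
    (x₀ : ℝ) (hx₀ : t x₀ ≠ 0) (α β : ℂ)
    (hα : ‖α‖ = 1) (hβ : ‖β‖ = 1)
    (hαt : s x₀ = α * t x₀) (hβt : t x₀ = β * (starRingEnd ℂ) (t x₀)) :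
    ∀ x : ℝ,
      (s x - α * Complex.exp (Complex.I * ((N : ℂ) + 1) * ((x : ℂ) - (x₀ : ℂ))) * t x) *
        ((starRingEnd ℂ) (s x) - (starRingEnd ℂ) α * (starRingEnd ℂ) β * t x) = 0 :=
  trig_identity_factorization_general N s t hid x₀ hx₀ α β hα hβ hαt hβt
end

section
/- Let N ≥ 1 and let a : ℤ → ℝ. The (N+1)×(N+1) real Toeplitz matrix T with entries T j k = a (j - k) is normal (T * Tᵀ = Tᵀ * T) if and only if for all m, n with 1 ≤ m, n ≤ N: a m * a n - a (-m) * a (-n) + a (N+1-m) * a (N+1-n) - a (-(N+1-m)) * a (-(N+1-n)) = 0. -/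
/-!
Let `D j k = ∑ s ∈ [0, N], (a (j - s) a (k - s) - a (s - j) a (s - k))`, the `(j, k)` entry of
`T Tᵀ - Tᵀ T` extended to all integer indices. Shifting both indices down by one changes `D`
only by the two boundary terms of the sum, and these make up the expression in the condition;
moreover `D (N - k) (N - j) = - D j k`. So the condition holds exactly when `D` is constant along
the diagonals of `[0, N]²`, and since each such diagonal joins `(j, k)` to its mirror image
`(N - k, N - j)`, this forces `D j k = - D j k`, i.e. `D = 0` on `[0, N]²`.
-/

open Finset Matrix

namespace Toeplitz

variable {R : Type*} [CommRing R] (N : ℕ) (a : ℤ → R)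

def commEntry (j k : ℤ) : R :=
  ∑ s ∈ range (N + 1), (a (j - s) * a (k - s) - a (s - j) * a (s - k))

def commIncrement (m n : ℤ) : R :=
  a m * a n - a (-m) * a (-n) + a (N + 1 - m) * a (N + 1 - n)
    - a (-(N + 1 - m)) * a (-(N + 1 - n))

theorem commEntry_sub_commEntry_sub_one (j k : ℤ) :
    commEntry N a j k - commEntry N a (j - 1) (k - 1) = commIncrement N a j k := by
  set g : ℕ → R := fun s => a (j - s) * a (k - s) - a (s - j) * a (s - k) with hg
  have hshift : commEntry N a (j - 1) (k - 1) = ∑ s ∈ range (N + 1), g (s + 1) := by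
    refine sum_congr rfl fun s _ => ?_
    simp only [hg]
    push_cast
    ring_nf
  rw [hshift, commEntry, ← sum_sub_distrib, sum_range_sub' g (N + 1), commIncrement]
  simp only [hg]
  push_cast
  rw [show j - (N + 1) = -(N + 1 - j) by ring, show k - (N + 1) = -(N + 1 - k) by ring]
  ring_nf

theorem commEntry_reflect (j k : ℤ) : commEntry N a (N - k) (N - j) = -commEntry N a j k := by
  rw [commEntry, commEntry, ← sum_range_reflect, ← sum_neg_distrib]
  refine sum_congr rfl fun s hs => ?_
  have hcast : ((N + 1 - 1 - s : ℕ) : ℤ) = N - s := by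
    have := mem_range.mp hs
    omega
  rw [hcast]
  ring_nf

theorem commEntry_sub_commEntry_sub (j k : ℤ) (r : ℕ) :
    commEntry N a j k - commEntry N a (j - r) (k - r) =
      ∑ i ∈ range r, commIncrement N a (j - i) (k - i) := by
  have := sum_range_sub' (fun i : ℕ => commEntry N a (j - i) (k - i)) r
  simp only [Nat.cast_zero, sub_zero] at this
  rw [← this]
  refine sum_congr rfl fun i _ => ?_
  rw [← commEntry_sub_commEntry_sub_one]
  push_cast
  ring_nf

variable {N a}

theorem commEntry_eq_zero_of_commIncrement_eq_zero [IsAddTorsionFree R]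
    (h : ∀ m n : ℤ, 1 ≤ m → m ≤ N → 1 ≤ n → n ≤ N → commIncrement N a m n = 0)
    {j k : ℤ} (hj0 : 0 ≤ j) (hjN : j ≤ N) (hk0 : 0 ≤ k) (hkN : k ≤ N) :
    commEntry N a j k = 0 := by
  wlog hjk : (N : ℤ) ≤ j + k generalizing j k
  · have := this (j := N - k) (k := N - j) (by omega) (by omega) (by omega) (by omega)
      (by omega)
    rwa [commEntry_reflect, neg_eq_zero] at this
  obtain ⟨r, hr⟩ : ∃ r : ℕ, (r : ℤ) = j + k - N := ⟨(j + k - N).toNat, by omega⟩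
  have hdiag : ∑ i ∈ range r, commIncrement N a (j - i) (k - i) = 0 :=
    sum_eq_zero fun i hi => by
      have := mem_range.mp hi
      exact h _ _ (by omega) (by omega) (by omega) (by omega)
  have htele := commEntry_sub_commEntry_sub N a j k r
  rw [hdiag, show j - r = N - k by omega, show k - r = N - j by omega, commEntry_reflect,
    sub_neg_eq_add] at htele
  exact self_eq_neg.mp (eq_neg_of_add_eq_zero_left htele)

theorem forall_commEntry_eq_zero_iff [IsAddTorsionFree R] :
    (∀ j k : ℤ, 0 ≤ j → j ≤ N → 0 ≤ k → k ≤ N → commEntry N a j k = 0) ↔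
      ∀ m n : ℤ, 1 ≤ m → m ≤ N → 1 ≤ n → n ≤ N → commIncrement N a m n = 0 := by
  refine ⟨fun h m n hm1 hmN hn1 hnN => ?_,
    fun h j k => commEntry_eq_zero_of_commIncrement_eq_zero h⟩
  rw [← commEntry_sub_commEntry_sub_one, h m n (by omega) hmN (by omega) hnN,
    h (m - 1) (n - 1) (by omega) (by omega) (by omega) (by omega), sub_zero]

theorem mul_transpose_sub_transpose_mul_apply {T : Matrix (Fin (N + 1)) (Fin (N + 1)) R}
    (hT : ∀ j k : Fin (N + 1), T j k = a (j - k)) (j k : Fin (N + 1)) :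
    (T * Tᵀ - Tᵀ * T) j k = commEntry N a j k := by
  simp only [Matrix.sub_apply, mul_apply, transpose_apply, hT, commEntry, sum_sub_distrib]
  rw [← Fin.sum_univ_eq_sum_range (fun s => a (j - s) * a (k - s)),
    ← Fin.sum_univ_eq_sum_range (fun s => a (s - j) * a (s - k))]

theorem mul_transpose_eq_transpose_mul_iff {T : Matrix (Fin (N + 1)) (Fin (N + 1)) R}
    (hT : ∀ j k : Fin (N + 1), T j k = a (j - k)) :
    T * Tᵀ = Tᵀ * T ↔
      ∀ j k : ℤ, 0 ≤ j → j ≤ N → 0 ≤ k → k ≤ N → commEntry N a j k = 0 := by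
  rw [← sub_eq_zero, ← Matrix.ext_iff]
  simp only [mul_transpose_sub_transpose_mul_apply hT, Matrix.zero_apply]
  refine ⟨fun h j k hj0 hjN hk0 hkN => ?_,
    fun h j k => h j k (by omega) (by omega) (by omega) (by omega)⟩
  simpa [Int.toNat_of_nonneg hj0, Int.toNat_of_nonneg hk0] using
    h ⟨j.toNat, by omega⟩ ⟨k.toNat, by omega⟩

end Toeplitz

theorem real_normal_toeplitz_iff_condition_general (N : ℕ) (a : ℤ → ℝ)
    (T : Matrix (Fin (N + 1)) (Fin (N + 1)) ℝ)
    (hT : ∀ j k : Fin (N + 1), T j k = a ((j : ℤ) - (k : ℤ))) :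
    T * Tᵀ = Tᵀ * T ↔
      ∀ m n : ℤ, 1 ≤ m → m ≤ N → 1 ≤ n → n ≤ N →
        a m * a n - a (-m) * a (-n)
          + a ((N : ℤ) + 1 - m) * a ((N : ℤ) + 1 - n)
          - a (-((N : ℤ) + 1 - m)) * a (-((N : ℤ) + 1 - n)) = 0 :=
  (Toeplitz.mul_transpose_eq_transpose_mul_iff hT).trans
    Toeplitz.forall_commEntry_eq_zero_iff

theorem real_normal_toeplitz_iff_condition (N : ℕ) (hN : 1 ≤ N) (a : ℤ → ℝ)
    (T : Matrix (Fin (N + 1)) (Fin (N + 1)) ℝ)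
    (hT : ∀ j k : Fin (N + 1), T j k = a ((j : ℤ) - (k : ℤ))) :
    T * Tᵀ = Tᵀ * T ↔
      ∀ m n : ℤ, 1 ≤ m → m ≤ N → 1 ≤ n → n ≤ N →
        a m * a n - a (-m) * a (-n)
          + a ((N : ℤ) + 1 - m) * a ((N : ℤ) + 1 - n)
          - a (-((N : ℤ) + 1 - m)) * a (-((N : ℤ) + 1 - n)) = 0 :=
  real_normal_toeplitz_iff_condition_general N a T hT
end
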